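/- The shuffle relation for multiple zeta values: ζ(3)·ζ(3) = 2ζ(3,3) + 6ζ(2,4) + 12ζ(1,5). -/

import Mathlib

/-- The Riemann zeta value ζ(n) = Σ_{k ≥ 1} 1/kⁿ. -/
noncomputable def riemannZetaValue (n : ℕ) : ℝ := ∑' k : ℕ+, 1 / (k : ℝ) ^ n

/-- The double zeta value ζ(n₁, n₂) = Σ_{0 < k₁ < k₂} 1/(k₁^{n₁} k₂^{n₂}). -/
noncomputable def doubleZetaValue (n₁ n₂ : ℕ) : ℝ :=
  ∑' p : {p : ℕ+ × ℕ+ // p.1 < p.2}, 1 / ((p.val.1 : ℝ) ^ n₁ * (p.val.2 : ℝ) ^ n₂)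

/-!
Expand `ζ(3)²` as the sum of `1 / (a³ b³)` over pairs `(a, b)` of positive integers and split
each summand by partial fractions into terms `1 / (a^i (a + b)^(6 - i))` and their mirror images
in `a ↔ b`. The substitution `(k₁, k₂) = (a, a + b)` turns each family of terms into a double
zeta value, and the symmetry `a ↔ b` doubles it.
-/

noncomputable def doubleZetaTerm (n₁ n₂ : ℕ) (p : ℕ+ × ℕ+) : ℝ :=
  1 / ((p.1 : ℝ) ^ n₁ * ((p.1 : ℝ) + p.2) ^ n₂)

lemma summable_one_div_pnat_pow {n : ℕ} (hn : 1 < n) :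
    Summable fun k : ℕ+ => 1 / (k : ℝ) ^ n :=
  summable_pnat_iff_summable_nat.mpr (Real.summable_one_div_nat_pow.mpr hn)

lemma riemannZetaValue_mul_riemannZetaValue {m n : ℕ} (hm : 1 < m) (hn : 1 < n) :
    riemannZetaValue m * riemannZetaValue n =
      ∑' p : ℕ+ × ℕ+, 1 / ((p.1 : ℝ) ^ m * (p.2 : ℝ) ^ n) := by
  have hsm := summable_one_div_pnat_pow hm
  have hsn := summable_one_div_pnat_pow hn
  rw [riemannZetaValue, riemannZetaValue,
    hsm.tsum_mul_tsum hsn (hsm.mul_of_nonneg hsn (fun _ => by positivity) fun _ => by positivity)]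
  simp only [div_mul_div_comm, one_mul]

lemma summable_doubleZetaTerm {n₁ n₂ : ℕ} (h₂ : 2 ≤ n₂) (h : 4 ≤ n₁ + n₂) :
    Summable (doubleZetaTerm n₁ n₂) := by
  have hs := summable_one_div_pnat_pow (n := 2) one_lt_two
  refine (hs.mul_of_nonneg hs (fun _ => by positivity) fun _ => by positivity).of_nonneg_of_le
    (fun _ => by unfold doubleZetaTerm; positivity) fun ⟨a, b⟩ => ?_
  have ha : (1 : ℝ) ≤ a := by exact_mod_cast a.pos
  have hb : (0 : ℝ) ≤ b := b.val.cast_nonneg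
  rw [doubleZetaTerm, div_mul_div_comm, one_mul]
  refine one_div_le_one_div_of_le (by positivity) ?_
  calc (a : ℝ) ^ 2 * (b : ℝ) ^ 2 ≤ (a : ℝ) ^ (n₁ + (n₂ - 2)) * ((a : ℝ) + b) ^ 2 := by
        have hab : (b : ℝ) ≤ a + b := by linarith
        exact mul_le_mul (pow_le_pow_right₀ ha (by omega)) (pow_le_pow_left₀ hb hab 2)
          (by positivity) (by positivity)
    _ = (a : ℝ) ^ n₁ * (a : ℝ) ^ (n₂ - 2) * ((a : ℝ) + b) ^ 2 := by rw [pow_add]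
    _ ≤ (a : ℝ) ^ n₁ * ((a : ℝ) + b) ^ (n₂ - 2) * ((a : ℝ) + b) ^ 2 := by gcongr; linarith
    _ = (a : ℝ) ^ n₁ * ((a : ℝ) + b) ^ n₂ := by rw [mul_assoc, ← pow_add, Nat.sub_add_cancel h₂]

def pnatPairEquivLt : ℕ+ × ℕ+ ≃ {p : ℕ+ × ℕ+ // p.1 < p.2} where
  toFun p := ⟨(p.1, p.1 + p.2), PNat.lt_add_right _ _⟩
  invFun q := (q.val.1, q.val.2 - q.val.1)
  left_inv p := by simp [add_comm p.1, PNat.add_sub]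
  right_inv q := by ext <;> simp [PNat.add_sub_of_lt q.prop]

lemma tsum_doubleZetaTerm (n₁ n₂ : ℕ) :
    ∑' p, doubleZetaTerm n₁ n₂ p = doubleZetaValue n₁ n₂ := by
  rw [doubleZetaValue, ← pnatPairEquivLt.tsum_eq]
  simp [pnatPairEquivLt, doubleZetaTerm]

lemma hasSum_doubleZetaTerm_add_swap {n₁ n₂ : ℕ} (h₂ : 2 ≤ n₂) (h : 4 ≤ n₁ + n₂) :
    HasSum (fun p => doubleZetaTerm n₁ n₂ p + doubleZetaTerm n₁ n₂ p.swap)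
      (2 * doubleZetaValue n₁ n₂) := by
  have hs := tsum_doubleZetaTerm n₁ n₂ ▸ (summable_doubleZetaTerm h₂ h).hasSum
  rw [two_mul]
  exact hs.add ((Equiv.prodComm ℕ+ ℕ+).hasSum_iff.mpr hs)

/-- The coefficient of `1 / (a^i (a + b)^(6 - i))` is `C(5 - i, 2)`. -/
lemma one_div_pow_three_mul_pow_three {K : Type*} [Field K] {a b : K} (ha : a ≠ 0) (hb : b ≠ 0)
    (hab : a + b ≠ 0) :
    1 / (a ^ 3 * b ^ 3) =
      (1 / (a ^ 3 * (a + b) ^ 3) + 1 / (b ^ 3 * (b + a) ^ 3)) +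
        3 * (1 / (a ^ 2 * (a + b) ^ 4) + 1 / (b ^ 2 * (b + a) ^ 4)) +
          6 * (1 / (a ^ 1 * (a + b) ^ 5) + 1 / (b ^ 1 * (b + a) ^ 5)) := by
  rw [add_comm b a]
  field_simp
  ring

/-- Shuffle relation: ζ(3)·ζ(3) = 2ζ(3,3) + 6ζ(2,4) + 12ζ(1,5). -/
theorem zeta3_mul_zeta3 :
    riemannZetaValue 3 * riemannZetaValue 3 =
      2 * doubleZetaValue 3 3 + 6 * doubleZetaValue 2 4 + 12 * doubleZetaValue 1 5 := by
  have h33 := hasSum_doubleZetaTerm_add_swap (n₁ := 3) (n₂ := 3) (by norm_num) (by norm_num)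
  have h24 := hasSum_doubleZetaTerm_add_swap (n₁ := 2) (n₂ := 4) (by norm_num) (by norm_num)
  have h15 := hasSum_doubleZetaTerm_add_swap (n₁ := 1) (n₂ := 5) (by norm_num) (by norm_num)
  calc riemannZetaValue 3 * riemannZetaValue 3
      = ∑' p : ℕ+ × ℕ+, 1 / ((p.1 : ℝ) ^ 3 * (p.2 : ℝ) ^ 3) :=
        riemannZetaValue_mul_riemannZetaValue (by norm_num) (by norm_num)
    _ = _ := tsum_congr fun p => one_div_pow_three_mul_pow_three
        (a := (p.1 : ℝ)) (b := p.2) (by positivity) (by positivity) (by positivity)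
    _ = _ := ((h33.add (h24.mul_left 3)).add (h15.mul_left 6)).tsum_eq.trans (by ring)
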